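/- arXiv:1306.1293 — 6 statements merged into one kernel-verified Lean document; each statement's English description precedes it below -/
import Mathlib

section
/- For all natural numbers n and ℓ and every natural number r with r ≥ nℓ, the identity ∑_{j=0}^{n} (-1)^j · C(n,j) · C(r − jℓ, n) = ℓ^n holds in the integers, where C(a,b) denotes the ordinary binomial coefficient. -/
/-!
The sum is the `n`-th forward difference with step `ℓ` of `x ↦ C(x, n)` at `r - nℓ`, read backwards.
A step-`ℓ` difference telescopes into `ℓ` unit steps, and the unit difference lowers `C(x, m + 1)`
to `C(x, m)`; so each of the `n` differences contributes a factor `ℓ` and leaves the constant `ℓ^n`.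
-/

open Finset fwdDiff

lemma fwdDiff_nsmul_eq_sum {M G : Type*} [AddCommMonoid M] [AddCommGroup G]
    (h : M) (f : M → G) (ℓ : ℕ) (x : M) :
    Δ_[ℓ • h] f x = ∑ i ∈ range ℓ, Δ_[h] f (x + i • h) := by
  have htelescope := sum_range_sub (fun i ↦ f (x + i • h)) ℓ
  simp only [succ_nsmul, ← add_assoc, zero_smul, add_zero] at htelescope
  exact htelescope.symm

lemma fwdDiff_choose_succ (ℓ m : ℕ) :
    Δ_[ℓ] (fun x ↦ x.choose (m + 1) : ℕ → ℤ) = ∑ i ∈ range ℓ, fun x ↦ ((x + i).choose m : ℤ) := by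
  ext x
  have hsplit := fwdDiff_nsmul_eq_sum 1 (fun x ↦ x.choose (m + 1) : ℕ → ℤ) ℓ x
  rw [smul_eq_mul, mul_one] at hsplit
  simp [hsplit, fwdDiff_choose]

lemma fwdDiff_iter_choose_self (ℓ n : ℕ) :
    (Δ_[ℓ])^[n] (fun x ↦ x.choose n : ℕ → ℤ) = fun _ ↦ (ℓ : ℤ) ^ n := by
  induction n with
  | zero => simp
  | succ n ih =>
    ext y
    rw [Function.iterate_succ_apply, fwdDiff_choose_succ, fwdDiff_iter_finsetSum, Finset.sum_apply,
      sum_congr rfl fun i _ ↦ fwdDiff_iter_comp_add ℓ (fun x ↦ x.choose n : ℕ → ℤ) i n y]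
    simp [ih, pow_succ, mul_comm]

/-- For all natural numbers `n`, `ℓ` and every natural number `r` with `r ≥ n * ℓ`,
`∑_{j=0}^{n} (-1)^j * C(n,j) * C(r - j*ℓ, n) = ℓ^n` in the integers. -/
theorem stmt_0 (n ℓ r : ℕ) (h : n * ℓ ≤ r) :
    ∑ j ∈ Finset.range (n + 1),
      (-1 : ℤ) ^ j * (n.choose j : ℤ) * ((r - j * ℓ).choose n : ℤ) = (ℓ : ℤ) ^ n := by
  have key := fwdDiff_iter_eq_sum_shift ℓ (fun x ↦ x.choose n : ℕ → ℤ) n (r - n * ℓ)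
  rw [fwdDiff_iter_choose_self, ← sum_range_reflect] at key
  dsimp only at key
  rw [key]
  refine sum_congr rfl fun j hj ↦ ?_
  have hjn : j ≤ n := Nat.lt_succ_iff.mp (mem_range.mp hj)
  have hshift : r - n * ℓ + (n + 1 - 1 - j) • ℓ = r - j * ℓ := by
    rw [smul_eq_mul, add_tsub_cancel_right, Nat.sub_mul]
    have := Nat.mul_le_mul_right ℓ hjn
    omega
  rw [hshift, add_tsub_cancel_right, Nat.sub_sub_self hjn, Nat.choose_symm hjn, zsmul_eq_mul]
  push_cast
  ring
end

section
/- Fix natural numbers n ≥ 1 and ℓ ≥ 1 and functions s, t, u, v : ℤ → ℤ. For a natural number i and an integer d, define a_i(d) = ∑_{j=1}^{i} (-1)^{j-1} C(i,j) C(n + d − jℓ, n) + iℓn·(∇^{i-1}_ℓ s)(d − ℓ) + iℓ·(∇^{i-1}_ℓ u)(d − ℓ) + (dn + 1)·(∇^i_ℓ s)(d) + (∇^i_ℓ t)(d) + (d + 1)·(∇^i_ℓ u)(d) + (n + 1)·(∇^i_ℓ v)(d) (for i = 0 the first three terms are absent). Then for all natural numbers i and all d ≥ (i+1)ℓ, a_{i+1}(d)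 + a_i(d − ℓ) = C(n + d − ℓ, n) + a_i(d). -/
/-!
Writing `g x = C(n + x, n)`, the alternating binomial sum in `a_i(d)` is `g d - ∇^i_ℓ g d`, so
every term of `a_i` is a backward difference. Pascal's rule gives `∇^{i+1} f = ∇^i f - ∇^i f(· - ℓ)`,
and with it both sides of the identity telescope to the same expression; the factors `i` in front
of `∇^{i-1}` make the case `i = 0` harmless.
-/

/-- The `i`-th backward difference of `f : ℤ → ℤ` with step `ℓ`:
`(∇^i_ℓ f)(x) = ∑_{j=0}^{i} (-1)^j C(i,j) f(x - jℓ)`. -/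
def nabla (ℓ : ℕ) (f : ℤ → ℤ) (i : ℕ) (x : ℤ) : ℤ :=
  ∑ j ∈ Finset.range (i + 1), (-1 : ℤ) ^ j * (i.choose j : ℤ) * f (x - (j : ℤ) * (ℓ : ℤ))

/-- The quantity `a_i(d)` built from `n`, `ℓ` and the functions `s`, `t`, `u`, `v`.
For `i = 0` the first three terms vanish automatically. -/
def aFun (n ℓ : ℕ) (s t u v : ℤ → ℤ) (i : ℕ) (d : ℤ) : ℤ :=
  (∑ j ∈ Finset.Icc 1 i,
      (-1 : ℤ) ^ (j - 1) * (i.choose j : ℤ) * (((n : ℤ) + d - (j : ℤ) * (ℓ : ℤ)).toNat.choose n : ℤ))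
    + (i : ℤ) * (ℓ : ℤ) * (n : ℤ) * nabla ℓ s (i - 1) (d - (ℓ : ℤ))
    + (i : ℤ) * (ℓ : ℤ) * nabla ℓ u (i - 1) (d - (ℓ : ℤ))
    + (d * (n : ℤ) + 1) * nabla ℓ s i d
    + nabla ℓ t i d
    + (d + 1) * nabla ℓ u i d
    + ((n : ℤ) + 1) * nabla ℓ v i d

open Finset

lemma nabla_succ (ℓ : ℕ) (f : ℤ → ℤ) (i : ℕ) (x : ℤ) :
    nabla ℓ f (i + 1) x = nabla ℓ f i x - nabla ℓ f i (x - ℓ) := by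
  have shift : nabla ℓ f i (x - ℓ) =
      ∑ j ∈ range (i + 1), (-1) ^ j * (i.choose j : ℤ) * f (x - (j + 1 : ℕ) * ℓ) := by
    refine sum_congr rfl fun j _ => ?_
    push_cast; ring_nf
  have top : nabla ℓ f i x =
      ∑ j ∈ range (i + 1 + 1), (-1) ^ j * (i.choose j : ℤ) * f (x - j * ℓ) := by
    rw [nabla, sum_range_succ _ (i + 1), Nat.choose_succ_self]; simp
  rw [shift, top, nabla, sum_range_succ', sum_range_succ' _ (i + 1), ← sub_add_eq_add_sub,
    ← sum_sub_distrib]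
  simp only [Nat.choose_succ_succ', Nat.choose_zero_right, Nat.cast_add]
  congr 1
  exact sum_congr rfl fun j _ => by ring

lemma sum_Icc_eq_sub_nabla (ℓ : ℕ) (g : ℤ → ℤ) (i : ℕ) (x : ℤ) :
    ∑ j ∈ Icc 1 i, (-1) ^ (j - 1) * (i.choose j : ℤ) * g (x - j * ℓ) = g x - nabla ℓ g i x := by
  rw [nabla, range_eq_Ico, sum_eq_sum_Ico_succ_bot (Nat.succ_pos i), zero_add,
    Nat.succ_eq_add_one, Ico_add_one_right_eq_Icc]
  simp only [pow_zero, Nat.choose_zero_right, Nat.cast_one, Nat.cast_zero, zero_mul, sub_zero,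
    one_mul, sub_add_cancel_left, ← sum_neg_distrib]
  refine sum_congr rfl fun j hj => ?_
  obtain ⟨k, rfl⟩ := Nat.exists_eq_add_of_le' (mem_Icc.1 hj).1
  simp only [Nat.add_sub_cancel, pow_succ]
  ring

lemma natCast_mul_nabla_pred_sub (ℓ : ℕ) (f : ℤ → ℤ) (i : ℕ) (x : ℤ) :
    (i : ℤ) * nabla ℓ f (i - 1) x - i * nabla ℓ f (i - 1) (x - ℓ) = i * nabla ℓ f i x := by
  cases i with
  | zero => simp
  | succ k => rw [Nat.add_sub_cancel, nabla_succ]; ring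

lemma aFun_eq (n ℓ : ℕ) (s t u v : ℤ → ℤ) (i : ℕ) (d : ℤ) :
    aFun n ℓ s t u v i d =
      ((n + d).toNat.choose n : ℤ) - nabla ℓ (fun x ↦ ((n + x).toNat.choose n : ℤ)) i d
      + i * ℓ * n * nabla ℓ s (i - 1) (d - ℓ) + i * ℓ * nabla ℓ u (i - 1) (d - ℓ)
      + (d * n + 1) * nabla ℓ s i d + nabla ℓ t i d + (d + 1) * nabla ℓ u i d
      + (n + 1) * nabla ℓ v i d := by
  rw [aFun, ← sum_Icc_eq_sub_nabla ℓ (fun x ↦ ((n + x).toNat.choose n : ℤ))]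
  simp only [add_sub_assoc]

theorem stmt_4_general (n ℓ : ℕ) (s t u v : ℤ → ℤ)
    (i : ℕ) (d : ℤ) :
    aFun n ℓ s t u v (i + 1) d + aFun n ℓ s t u v i (d - (ℓ : ℤ))
      = ((((n : ℤ) + d - (ℓ : ℤ)).toNat.choose n : ℤ)) + aFun n ℓ s t u v i d := by
  have hs := natCast_mul_nabla_pred_sub ℓ s i (d - ℓ)
  have hu := natCast_mul_nabla_pred_sub ℓ u i (d - ℓ)
  simp only [aFun_eq, nabla_succ, Nat.add_sub_cancel, ← add_sub_assoc]
  push_cast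
  linear_combination -(ℓ * n : ℤ) * hs - (ℓ : ℤ) * hu

/-- For all natural `i` and all integers `d ≥ (i+1)ℓ`,
`a_{i+1}(d) + a_i(d - ℓ) = C(n + d - ℓ, n) + a_i(d)`. -/
theorem stmt_4 (n ℓ : ℕ) (hn : 1 ≤ n) (hℓ : 1 ≤ ℓ) (s t u v : ℤ → ℤ)
    (i : ℕ) (d : ℤ) (hd : ((i : ℤ) + 1) * (ℓ : ℤ) ≤ d) :
    aFun n ℓ s t u v (i + 1) d + aFun n ℓ s t u v i (d - (ℓ : ℤ))
      = ((((n : ℤ) + d - (ℓ : ℤ)).toNat.choose n : ℤ)) + aFun n ℓ s t u v i d :=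
  stmt_4_general n ℓ s t u v i d
end

section
/- Define s₁(d) = d²/18 + 5d/18 + c₁(d) where c₁(d) = 0 if d ≡ 0,4 (mod 9), 2/9 if d ≡ 2,5,8 (mod 9), 2/3 if d ≡ 1,3 (mod 9), and 1/3 if d ≡ 6,7 (mod 9); and define s₂''(d) = d²/18 + 7d/18 + c₂(d) where c₂(d) = 0 if d ≡ 0 (mod 9), 5/9 if d ≡ 1,4,7 (mod 9), 1 if d ≡ 2 (mod 9), 1/3 if d ≡ 3,8 (mod 9), and 2/3 if d ≡ 5,6 (mod 9). Then for every natural number d ≥ 1, s₁(d) ≤ C(d+3,3)/(3d+1) ≤ s₂''(d), as an inequality of rational numbers. -/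
/-- The constant term of `s₁`, depending on `d mod 9`. -/
noncomputable def c1 (d : ℕ) : ℚ :=
  if d % 9 = 0 ∨ d % 9 = 4 then 0
  else if d % 9 = 2 ∨ d % 9 = 5 ∨ d % 9 = 8 then 2/9
  else if d % 9 = 1 ∨ d % 9 = 3 then 2/3
  else 1/3

/-- `s₁(d) = d²/18 + 5d/18 + c₁(d)`. -/
noncomputable def s1 (d : ℕ) : ℚ := (d : ℚ) ^ 2 / 18 + 5 * (d : ℚ) / 18 + c1 d

/-- The constant term of `s₂''`, depending on `d mod 9`. -/
noncomputable def c2 (d : ℕ) : ℚ :=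
  if d % 9 = 0 then 0
  else if d % 9 = 1 ∨ d % 9 = 4 ∨ d % 9 = 7 then 5/9
  else if d % 9 = 2 then 1
  else if d % 9 = 3 ∨ d % 9 = 8 then 1/3
  else 2/3

/-- `s₂''(d) = d²/18 + 7d/18 + c₂(d)`. -/
noncomputable def s2'' (d : ℕ) : ℚ := (d : ℚ) ^ 2 / 18 + 7 * (d : ℚ) / 18 + c2 d

/-!
Clearing denominators, `162 (3d + 1) (C(d+3,3)/(3d+1) - s₁(d)) = 18 (d - 1)(d - 3) + 162 (3d + 1)(2/3 - c₁(d))`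
and `162 (3d + 1) (s₂''(d) - C(d+3,3)/(3d+1)) = 18 (2d² - 13d - 9) + 162 (3d + 1) c₂(d)`.
Since `c₁ ≤ 2/3` and `c₂ ≥ 0`, both gaps are nonnegative except possibly for `d = 2` (lower bound)
and `d ≤ 7` (upper bound), which are checked directly.
-/

theorem cast_choose_three_add_three (d : ℕ) :
    ((d + 3).choose 3 : ℚ) = (d + 1) * (d + 2) * (d + 3) / 6 := by
  rw [Nat.cast_choose_eq_ascPochhammer_div, show d + 3 - (3 - 1) = d + 1 by omega]
  norm_num [ascPochhammer_succ_eval, Nat.factorial]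
  ring

theorem c1_le (d : ℕ) : c1 d ≤ 2 / 3 := by
  unfold c1
  split_ifs <;> norm_num

theorem c2_nonneg (d : ℕ) : 0 ≤ c2 d := by
  unfold c2
  split_ifs <;> norm_num

theorem s1_le_choose_div_of_ne_two {d : ℕ} (hd : d ≠ 2) :
    s1 d ≤ ((d + 3).choose 3 : ℚ) / (3 * (d : ℚ) + 1) := by
  have hfactor : (0 : ℚ) ≤ ((d : ℚ) - 1) * ((d : ℚ) - 3) := by
    rcases Nat.lt_or_gt_of_ne hd with h | h
    · interval_cases d <;> norm_num
    · have : (3 : ℚ) ≤ d := by exact_mod_cast h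
      nlinarith
  rw [le_div_iff₀ (by positivity), cast_choose_three_add_three, s1]
  nlinarith [c1_le d]

theorem choose_div_le_s2''_of_eight_le {d : ℕ} (hd : 8 ≤ d) :
    ((d + 3).choose 3 : ℚ) / (3 * (d : ℚ) + 1) ≤ s2'' d := by
  have hd' : (8 : ℚ) ≤ d := by exact_mod_cast hd
  rw [div_le_iff₀ (by positivity), cast_choose_three_add_three, s2'']
  nlinarith [c2_nonneg d]

/-- For every `d ≥ 1`, `s₁(d) ≤ C(d+3,3)/(3d+1) ≤ s₂''(d)` as rational numbers. -/
theorem stmt_5 (d : ℕ) (hd : 1 ≤ d) :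
    s1 d ≤ ((d + 3).choose 3 : ℚ) / (3 * (d : ℚ) + 1) ∧
      ((d + 3).choose 3 : ℚ) / (3 * (d : ℚ) + 1) ≤ s2'' d := by
  constructor
  · rcases eq_or_ne d 2 with rfl | h2
    · norm_num [s1, c1, Nat.choose]
    · exact s1_le_choose_div_of_ne_two h2
  · rcases Nat.lt_or_ge d 8 with hsmall | hlarge
    · interval_cases d <;> norm_num [s2'', c2, Nat.choose]
    · exact choose_div_le_s2''_of_eight_le hlarge
end

section
/- Define maps φ₀, φ₁, φ₂ : ℚ⁶ → ℚ⁶ by φ₀(n,d,s,t,u,v) = (n−1, d, s/2, (t+u)/2, u/2, (s+v)/2), φ₁(n,d,s,t,u,v) = (n−1, d−1, s/2, (t+v)/2, (s+u)/2, v/2), and φ₂(n,d,s,t,u,v) = (n−1, d−2, 0, v/2, s/2, 0). Let n be a natural number, c, d ∈ ℚ, and let i, j, k be natural numbers with i + j + k ≤ n − 3 and k ≤ 2. Then (φ₀^i ∘ φ₁^j ∘ φ₂^k)(n, d, 2^{n−3}c, 0, 0, 0) equals: (n−i−j, d−j, 2^{n−3−i−j}c, 2^{n−3−i−j}c·ij,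 2^{n−3−i−j}c·j, 2^{n−3−i−j}c·i) if k = 0; (n−i−j−1, d−j−2, 0, 2^{n−4−i−j}c·i, 2^{n−4−i−j}c, 0) if k = 1; and (n−i−j−2, d−j−4, 0, 0, 0, 0) if k = 2, where φ^m denotes m-fold composition. -/
/-!
On `(s, t, u, v)`, both `φ₀` and `φ₁` are `1/2` times a unipotent linear map, so their iterates
have the closed forms below. The map `φ₂` sends `(S, 0, 0, 0)` to `(0, 0, S/2, 0)` and that to `0`,
so the three cases reduce to these closed forms; `i + j + k ≤ n - 3` guarantees that the truncated
exponents `n - 3 - i - j` and `n - 4 - i - j` are the honest ones, i.e. `2^{n-3} c` is divisible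
by `2^{i+j+k}`.
-/

/-- 6-tuples of rational numbers. -/
abbrev Q6 : Type := ℚ × ℚ × ℚ × ℚ × ℚ × ℚ

/-- `φ₀(n,d,s,t,u,v) = (n−1, d, s/2, (t+u)/2, u/2, (s+v)/2)`. -/
def phi0 : Q6 → Q6
  | (n, d, s, t, u, v) => (n - 1, d, s / 2, (t + u) / 2, u / 2, (s + v) / 2)

/-- `φ₁(n,d,s,t,u,v) = (n−1, d−1, s/2, (t+v)/2, (s+u)/2, v/2)`. -/
def phi1 : Q6 → Q6
  | (n, d, s, t, u, v) => (n - 1, d - 1, s / 2, (t + v) / 2, (s + u) / 2, v / 2)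

/-- `φ₂(n,d,s,t,u,v) = (n−1, d−2, 0, v/2, s/2, 0)`. -/
def phi2 : Q6 → Q6
  | (n, d, s, t, u, v) => (n - 1, d - 2, 0, v / 2, s / 2, 0)

lemma phi0_iterate_apply (m : ℕ) (a b s t u v : ℚ) :
    phi0^[m] (a, b, s, t, u, v) =
      (a - m, b, s / 2 ^ m, (t + m * u) / 2 ^ m, u / 2 ^ m, (v + m * s) / 2 ^ m) := by
  induction m with
  | zero => simp
  | succ m ih =>
    rw [Function.iterate_succ_apply', ih]
    simp only [phi0, Prod.mk.injEq]
    push_cast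
    refine ⟨by ring, trivial, ?_, ?_, ?_, ?_⟩ <;> ring

lemma phi1_iterate_apply (m : ℕ) (a b s t u v : ℚ) :
    phi1^[m] (a, b, s, t, u, v) =
      (a - m, b - m, s / 2 ^ m, (t + m * v) / 2 ^ m, (u + m * s) / 2 ^ m, v / 2 ^ m) := by
  induction m with
  | zero => simp
  | succ m ih =>
    rw [Function.iterate_succ_apply', ih]
    simp only [phi1, Prod.mk.injEq]
    push_cast
    refine ⟨by ring, by ring, ?_, ?_, ?_, ?_⟩ <;> ring

/-- The value of `(φ₀^i ∘ φ₁^j ∘ φ₂^k)(n, d, 2^{n−3}c, 0, 0, 0)` for `i + j + k ≤ n − 3`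
and `k ≤ 2`. -/
theorem stmt_9 (n : ℕ) (c d : ℚ) (i j k : ℕ) (hijk : i + j + k ≤ n - 3) (hk : k ≤ 2) :
    phi0^[i] (phi1^[j] (phi2^[k] ((n : ℚ), d, 2 ^ (n - 3) * c, 0, 0, 0))) =
      if k = 0 then
        ((n : ℚ) - i - j, d - j, 2 ^ (n - 3 - i - j) * c,
          2 ^ (n - 3 - i - j) * c * i * j, 2 ^ (n - 3 - i - j) * c * j,
          2 ^ (n - 3 - i - j) * c * i)
      else if k = 1 then
        ((n : ℚ) - i - j - 1, d - j - 2, 0, 2 ^ (n - 4 - i - j) * c * i,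
          2 ^ (n - 4 - i - j) * c, 0)
      else
        ((n : ℚ) - i - j - 2, d - j - 4, 0, 0, 0, 0) := by
  interval_cases k
  · have hpow : (2 : ℚ) ^ (n - 3) = 2 ^ (n - 3 - i - j) * 2 ^ i * 2 ^ j := by
      rw [← pow_add, ← pow_add]; congr 1; omega
    simp only [Function.iterate_zero_apply, phi1_iterate_apply, phi0_iterate_apply, hpow,
      if_pos, Prod.mk.injEq]
    refine ⟨by ring, trivial, ?_, ?_, ?_, ?_⟩ <;> field_simp <;> ring
  · have hpow : (2 : ℚ) ^ (n - 3) = 2 ^ (n - 4 - i - j) * 2 ^ i * 2 ^ j * 2 := by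
      rw [← pow_add, ← pow_add, ← pow_succ]; congr 1; omega
    simp only [Function.iterate_one, phi2, phi1_iterate_apply, phi0_iterate_apply, hpow]
    norm_num
    refine ⟨by ring, by ring, ?_, ?_⟩ <;> field_simp
  · simp only [Function.iterate_succ_apply', Function.iterate_zero_apply, phi2,
      phi1_iterate_apply, phi0_iterate_apply]
    norm_num
    refine ⟨by ring, by ring⟩
end

section
/- Let K be a field, let n ≥ 1 and d ≥ 1 be natural numbers, let R = K[x₀,…,x_n], and let R₁ denote the (n+1)-dimensional K-vector space of homogeneous polynomials of degree 1. Let ℓ₁,…,ℓ_d ∈ R₁ be nonzero linear forms, and for each j let π_j = ∏_{m ≠ j} ℓ_m. Then the K-subspace ∑_{j=1}^{d} π_j · R₁ of the space of degree-d homogeneous polynomials has dimension at most dn + 1. -/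
/-!
The products `π_j ℓ_j` all equal `Π = ∏_m ℓ_m`. Splitting `R₁ = K ℓ_j ⊕ C_j` with `dim C_j = n`
gives `π_j R₁ ⊆ K Π + π_j C_j`, so the sum of the `d` subspaces `π_j R₁` lies in
`K Π + ∑_j π_j C_j`, of dimension at most `1 + d n`.
-/

open MvPolynomial Module LinearMap

section

variable {K V M : Type*} [Field K] [AddCommGroup V] [Module K V] [AddCommGroup M] [Module K M]

theorem Submodule.finrank_finset_sup_le_sum {ι : Type*} (s : Finset ι) (p : ι → Submodule K M)
    [∀ i, FiniteDimensional K (p i)] :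
    finrank K ↥(s.sup p) ≤ ∑ i ∈ s, finrank K (p i) := by
  classical
  induction s using Finset.cons_induction with
  | empty => simp
  | cons a s ha ih =>
    rw [Finset.sup_cons, Finset.sum_cons]
    exact (Submodule.finrank_add_le_finrank_add_finrank _ _).trans (by gcongr)

theorem Submodule.finrank_iSup_le_sum {ι : Type*} [Fintype ι] (p : ι → Submodule K M)
    [∀ i, FiniteDimensional K (p i)] :
    finrank K ↥(⨆ i, p i) ≤ ∑ i, finrank K (p i) := by
  rw [← Finset.sup_univ_eq_iSup]
  exact Submodule.finrank_finset_sup_le_sum _ _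

theorem LinearMap.range_eq_span_sup_map_of_isCompl (f : V →ₗ[K] M) {v : V} {C : Submodule K V}
    (h : IsCompl (K ∙ v) C) : range f = (K ∙ f v) ⊔ C.map f := by
  rw [range_eq_map, ← h.sup_eq_top, Submodule.map_sup, Submodule.map_span, Set.image_singleton]

theorem Submodule.finrank_eq_of_isCompl_span_singleton [FiniteDimensional K V] {v : V}
    (hv : v ≠ 0) {C : Submodule K V} (h : IsCompl (K ∙ v) C) :
    finrank K C = finrank K V - 1 := by
  have := Submodule.finrank_add_eq_of_isCompl h
  rw [finrank_span_singleton hv] at this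
  omega

theorem finrank_iSup_range_le_of_apply_eq [FiniteDimensional K V] {ι : Type*} [Fintype ι]
    (f : ι → V →ₗ[K] M) {v : ι → V} (hv : ∀ i, v i ≠ 0) {p : M} (hp : ∀ i, f i (v i) = p) :
    finrank K ↥(⨆ i, range (f i)) ≤ Fintype.card ι * (finrank K V - 1) + 1 := by
  choose C hC using fun i => (K ∙ v i).exists_isCompl
  have hle : ⨆ i, range (f i) ≤ (K ∙ p) ⊔ ⨆ i, (C i).map (f i) := iSup_le fun i => by
    rw [(f i).range_eq_span_sup_map_of_isCompl (hC i), hp i]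
    exact sup_le_sup_left (le_iSup (fun i => (C i).map (f i)) i) _
  have hp_le : finrank K (K ∙ p) ≤ 1 := by simpa using finrank_span_le_card ({p} : Set M)
  calc finrank K ↥(⨆ i, range (f i))
      ≤ finrank K (K ∙ p) + finrank K ↥(⨆ i, (C i).map (f i)) :=
        (Submodule.finrank_mono hle).trans (Submodule.finrank_add_le_finrank_add_finrank _ _)
    _ ≤ 1 + ∑ i, finrank K ((C i).map (f i)) := by
        gcongr
        exact Submodule.finrank_iSup_le_sum _
    _ ≤ 1 + ∑ _i : ι, (finrank K V - 1) := by
        gcongr with i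
        exact (Submodule.finrank_map_le _ _).trans
          (Submodule.finrank_eq_of_isCompl_span_singleton (hv i) (hC i)).le
    _ = Fintype.card ι * (finrank K V - 1) + 1 := by simp [add_comm]

end

theorem stmt_11_general (K : Type*) [Field K] (n d : ℕ)
    (ℓ : Fin d → MvPolynomial (Fin (n + 1)) K)
    (hhom : ∀ j, ℓ j ∈ homogeneousSubmodule (Fin (n + 1)) K 1)
    (hne : ∀ j, ℓ j ≠ 0) :
    Module.finrank K
      ↥(⨆ j : Fin d,
          Submodule.map (LinearMap.mulLeft K (∏ m ∈ Finset.univ.erase j, ℓ m))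
            (homogeneousSubmodule (Fin (n + 1)) K 1)) ≤ d * n + 1 := by
  set V := homogeneousSubmodule (Fin (n + 1)) K 1
  have hV : V = Submodule.span K (Set.range X) := homogeneousSubmodule_one_eq_span_X
  have : FiniteDimensional K V := hV ▸ FiniteDimensional.span_of_finite K (Set.finite_range _)
  have hV_le : finrank K V ≤ n + 1 := by
    rw [hV]
    exact (finrank_range_le_card _).trans (by simp)
  have hmap : ∀ g, V.map (mulLeft K g) = range ((mulLeft K g).comp V.subtype) := fun g => by
    rw [range_comp, Submodule.range_subtype]
  calc finrank K ↥(⨆ j, V.map (mulLeft K (∏ m ∈ Finset.univ.erase j, ℓ m)))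
      ≤ d * (finrank K V - 1) + 1 := by
        rw [iSup_congr fun j => hmap _]
        simpa using finrank_iSup_range_le_of_apply_eq
          (fun j => (mulLeft K (∏ m ∈ Finset.univ.erase j, ℓ m)).comp V.subtype)
          (v := fun j => ⟨ℓ j, hhom j⟩) (fun j => by simpa [Subtype.ext_iff] using hne j)
          (p := ∏ m, ℓ m) fun j => Finset.prod_erase_mul _ _ (Finset.mem_univ j)
    _ ≤ d * n + 1 := by gcongr; omega

/-- Let `R = K[x₀,…,x_n]` and let `ℓ₁,…,ℓ_d` be nonzero linear forms. With
`π_j = ∏_{m ≠ j} ℓ_m`, the subspace `∑_j π_j · R₁` has dimension at most `d*n + 1`. -/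
theorem stmt_11 (K : Type*) [Field K] (n d : ℕ) (hn : 1 ≤ n) (hd : 1 ≤ d)
    (ℓ : Fin d → MvPolynomial (Fin (n + 1)) K)
    (hhom : ∀ j, ℓ j ∈ homogeneousSubmodule (Fin (n + 1)) K 1)
    (hne : ∀ j, ℓ j ≠ 0) :
    Module.finrank K
      ↥(⨆ j : Fin d,
          Submodule.map (LinearMap.mulLeft K (∏ m ∈ Finset.univ.erase j, ℓ m))
            (homogeneousSubmodule (Fin (n + 1)) K 1)) ≤ d * n + 1 :=
  stmt_11_general K n d ℓ hhom hne
end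

section
/- Let K be a field, let n ≥ 1, d ≥ 2, s ≥ 1 be natural numbers, and R = K[x₀,…,x_n] with R₁ the space of homogeneous linear forms. For each j ∈ {1,…,s} let (ℓ_{j,1},…,ℓ_{j,d}) be a tuple of nonzero linear forms such that no two entries of the same tuple are scalar multiples of each other, set π_{j,m} = ∏_{k ≠ m} ℓ_{j,k}, and let V_j = ∑_{m=1}^{d} π_{j,m} · R₁. If the subspaces V₁,…,V_s are independent (i.e., their sum is a direct sum ⨁_{j=1}^{s} V_j), then the s·d polynomials { π_{j,m} : 1 ≤ j ≤ s, 1 ≤ m ≤ d } are linearly independent over K. -/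
/-!
Multiplication by the linear form `X 0` is injective and sends `span {π_{j,m}}_m` into `V_j`,
so independence of the `V_j` forces independence of these spans, and it remains to show that
each block `π_{j,1}, …, π_{j,d}` is linearly independent. Linear forms are prime, and
`ℓ_{j,m}` divides `π_{j,k}` exactly when `k ≠ m`, because the `ℓ_{j,k}` are pairwise
non-associated.
-/

open MvPolynomial

section LinearAlgebra

variable {R M M' ι κ : Type*} [Ring R] [AddCommGroup M] [AddCommGroup M'] [Module R M]
  [Module R M']

theorem iSupIndep.of_map_of_injective {f : M →ₗ[R] M'} (hf : Function.Injective f)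
    {p : ι → Submodule R M} (h : iSupIndep fun i => (p i).map f) : iSupIndep p := by
  rw [iSupIndep_iff_finsetSum_eq_zero_imp_eq_zero] at h ⊢
  intro s v hv hsum i hi
  refine hf ?_
  rw [map_zero]
  exact h s (f ∘ v) (fun j hj => Submodule.mem_map_of_mem (hv j hj))
    (by simp only [Function.comp_apply, ← map_sum, hsum, map_zero]) i hi

theorem linearIndependent_uncurry_of_iSupIndep_span [Fintype ι] [Fintype κ] {v : ι → κ → M}
    (hv : ∀ i, LinearIndependent R (v i))
    (hind : iSupIndep fun i => Submodule.span R (Set.range (v i))) :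
    LinearIndependent R (fun p : ι × κ => v p.1 p.2) := by
  rw [Fintype.linearIndependent_iff]
  intro g hg p
  set w : ι → M := fun i => ∑ k, g (i, k) • v i k
  have hw_mem : ∀ i, w i ∈ Submodule.span R (Set.range (v i)) := fun i =>
    Submodule.sum_mem _ fun k _ => Submodule.smul_mem _ _ (Submodule.subset_span ⟨k, rfl⟩)
  have hw_sum : ∑ i, w i = 0 := by rw [← hg, Fintype.sum_prod_type]
  have hw_zero : w p.1 = 0 :=
    (iSupIndep_iff_finsetSum_eq_zero_imp_eq_zero _).mp hind Finset.univ w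
      (fun i _ => hw_mem i) hw_sum p.1 (Finset.mem_univ _)
  exact Fintype.linearIndependent_iff.mp (hv p.1) (fun k => g (p.1, k)) hw_zero p.2

end LinearAlgebra

theorem linearIndependent_prod_erase {K A ι : Type*} [Field K] [CommRing A] [Algebra K A]
    [Fintype ι] [DecidableEq ι] {f : ι → A} (hprime : ∀ i, Prime (f i))
    (hdvd : Pairwise fun i k => ¬ f i ∣ f k) :
    LinearIndependent K (fun m => ∏ k ∈ Finset.univ.erase m, f k) := by
  rw [Fintype.linearIndependent_iff]
  intro g hg m
  by_contra hgm
  have hdvd_others : f m ∣ ∑ k ∈ Finset.univ.erase m, g k • ∏ i ∈ Finset.univ.erase k, f i :=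
    Finset.dvd_sum fun k hk => by
      rw [Algebra.smul_def]
      exact dvd_mul_of_dvd_right (Finset.dvd_prod_of_mem _
        (Finset.mem_erase.mpr ⟨fun h => (Finset.mem_erase.mp hk).1 h.symm, Finset.mem_univ m⟩)) _
  have hdvd_self : f m ∣ algebraMap K A (g m) * ∏ i ∈ Finset.univ.erase m, f i := by
    rw [← Algebra.smul_def, ← dvd_add_right hdvd_others,
      Finset.sum_erase_add _ _ (Finset.mem_univ m), hg]
    exact dvd_zero _
  rcases (hprime m).dvd_or_dvd hdvd_self with h | h
  · exact (hprime m).not_isUnit (isUnit_of_dvd_unit h ((isUnit_iff_ne_zero.mpr hgm).map _))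
  · obtain ⟨k, hk, hmk⟩ := (hprime m).exists_mem_finset_dvd h
    exact hdvd (Finset.mem_erase.mp hk).1.symm hmk

namespace MvPolynomial

variable {σ : Type*}

theorem IsHomogeneous.irreducible_of_degree_one {K : Type*} [Field K] {p : MvPolynomial σ K}
    (hp : p.IsHomogeneous 1) (hp0 : p ≠ 0) : Irreducible p := by
  refine irreducible_of_totalDegree_eq_one (hp.totalDegree hp0) fun x hx => ?_
  obtain ⟨i, hi⟩ := ne_zero_iff.mp hp0
  exact isUnit_iff_ne_zero.mpr (ne_zero_of_dvd_ne_zero hi (hx i))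

theorem exists_eq_smul_of_associated {R : Type*} [CommRing R] [IsReduced R]
    {p q : MvPolynomial σ R} (h : Associated p q) : ∃ c : R, q = c • p := by
  obtain ⟨u, rfl⟩ := h
  obtain ⟨c, -, hc⟩ := isUnit_iff_eq_C_of_isReduced.mp u.isUnit
  exact ⟨c, by rw [hc, smul_eq_C_mul, mul_comm]⟩

end MvPolynomial

theorem stmt_12_general (K : Type*) [Field K] (n d s : ℕ)
    (ℓ : Fin s → Fin d → MvPolynomial (Fin (n + 1)) K)
    (hhom : ∀ j m, ℓ j m ∈ homogeneousSubmodule (Fin (n + 1)) K 1)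
    (hne : ∀ j m, ℓ j m ≠ 0)
    (hsc : ∀ j, ∀ m m' : Fin d, m ≠ m' → ∀ c : K, ℓ j m ≠ c • ℓ j m')
    (hindep : iSupIndep (fun j : Fin s =>
      ⨆ m : Fin d,
        Submodule.map (LinearMap.mulLeft K (∏ k ∈ Finset.univ.erase m, ℓ j k))
          (homogeneousSubmodule (Fin (n + 1)) K 1))) :
    LinearIndependent K
      (fun p : Fin s × Fin d => ∏ k ∈ Finset.univ.erase p.2, ℓ p.1 k) := by
  have hirr : ∀ j m, Irreducible (ℓ j m) := fun j m =>
    ((mem_homogeneousSubmodule _ _).mp (hhom j m)).irreducible_of_degree_one (hne j m)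
  have hblock : ∀ j, LinearIndependent K fun m => ∏ k ∈ Finset.univ.erase m, ℓ j k :=
    fun j => linearIndependent_prod_erase (fun m => (hirr j m).prime) fun m k hmk hdvd => by
      obtain ⟨c, hc⟩ := MvPolynomial.exists_eq_smul_of_associated ((hirr j m).associated_of_dvd
        (hirr j k) hdvd)
      exact hsc j k m (Ne.symm hmk) c hc
  have hX : ∀ j, (Submodule.span K (Set.range fun m => ∏ k ∈ Finset.univ.erase m, ℓ j k)).map
      (LinearMap.mulLeft K (X 0)) ≤ ⨆ m : Fin d,
        Submodule.map (LinearMap.mulLeft K (∏ k ∈ Finset.univ.erase m, ℓ j k))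
          (homogeneousSubmodule (Fin (n + 1)) K 1) := by
    intro j
    rw [Submodule.map_le_iff_le_comap, Submodule.span_le, Set.range_subset_iff]
    exact fun m => Submodule.mem_iSup_of_mem m ⟨X 0, (mem_homogeneousSubmodule _ _).mpr
      (isHomogeneous_X _ _), mul_comm _ _⟩
  have hspan : iSupIndep fun j =>
      Submodule.span K (Set.range fun m => ∏ k ∈ Finset.univ.erase m, ℓ j k) :=
    (hindep.mono hX).of_map_of_injective (mul_right_injective₀ (X_ne_zero 0))
  exact linearIndependent_uncurry_of_iSupIndep_span
    (v := fun j m => ∏ k ∈ Finset.univ.erase m, ℓ j k) hblock hspan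

/-- For each `j`, let `(ℓ_{j,1},…,ℓ_{j,d})` be nonzero linear forms, no two entries of the
same tuple scalar multiples of each other; set `π_{j,m} = ∏_{k ≠ m} ℓ_{j,k}` and
`V_j = ∑_m π_{j,m} · R₁`. If the subspaces `V₁,…,V_s` are independent, then the `s·d`
polynomials `π_{j,m}` are linearly independent over `K`. -/
theorem stmt_12 (K : Type*) [Field K] (n d s : ℕ) (hn : 1 ≤ n) (hd : 2 ≤ d) (hs : 1 ≤ s)
    (ℓ : Fin s → Fin d → MvPolynomial (Fin (n + 1)) K)
    (hhom : ∀ j m, ℓ j m ∈ homogeneousSubmodule (Fin (n + 1)) K 1)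
    (hne : ∀ j m, ℓ j m ≠ 0)
    (hsc : ∀ j, ∀ m m' : Fin d, m ≠ m' → ∀ c : K, ℓ j m ≠ c • ℓ j m')
    (hindep : iSupIndep (fun j : Fin s =>
      ⨆ m : Fin d,
        Submodule.map (LinearMap.mulLeft K (∏ k ∈ Finset.univ.erase m, ℓ j k))
          (homogeneousSubmodule (Fin (n + 1)) K 1))) :
    LinearIndependent K
      (fun p : Fin s × Fin d => ∏ k ∈ Finset.univ.erase p.2, ℓ p.1 k) :=
  stmt_12_general K n d s ℓ hhom hne hsc hindep
end
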